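/- For any x, y ∈ ℝ^m, ‖softmax(x) − softmax(y)‖₁ ≤ ‖x − y‖_∞, where softmax(u)_i = exp(u_i)/∑_j exp(u_j). Equivalently, the softmax map is 1-Lipschitz from (ℝ^m, ℓ∞) to (ℝ^m, ℓ¹). -/

import Mathlib

/-!
Along the segment `t ↦ y + t • (x - y)` the softmax vector `s` moves with
velocity `s ⊙ (v - ⟪s, v⟫ 𝟙)`, where `v = x - y`. Its `ℓ¹` norm is the mean
absolute deviation of `v` under the probability vector `s`, which is at most
`‖v‖_∞`; the mean value inequality in `ℓ¹` then gives the bound.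
-/

open Real Finset

variable {ι : Type*} [Fintype ι]

noncomputable def softmax (u : ι → ℝ) (i : ι) : ℝ :=
  exp (u i) / ∑ j, exp (u j)

lemma softmax_nonneg (u : ι → ℝ) (i : ι) : 0 ≤ softmax u i := by
  unfold softmax
  positivity

lemma sum_softmax [Nonempty ι] (u : ι → ℝ) : ∑ i, softmax u i = 1 := by
  simp only [softmax, ← Finset.sum_div]
  exact div_self (Finset.sum_pos (fun j _ => exp_pos (u j)) univ_nonempty).ne'

/-- Scaled to `d = 1`, this is `(1 - ab)² - (a - b)² = (1 - a²)(1 - b²) ≥ 0`. -/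
lemma mul_abs_sub_le_sub_mul {a b d : ℝ} (ha : |a| ≤ d) (hb : |b| ≤ d) :
    d * |a - b| ≤ d * d - a * b := by
  obtain ⟨ha₁, ha₂⟩ := abs_le.mp ha
  obtain ⟨hb₁, hb₂⟩ := abs_le.mp hb
  rcases le_total b a with hba | hab
  · rw [abs_of_nonneg (sub_nonneg.mpr hba)]
    nlinarith [mul_nonneg (by linarith : 0 ≤ d + b) (by linarith : 0 ≤ d - a)]
  · rw [abs_of_nonpos (sub_nonpos.mpr hab)]
    nlinarith [mul_nonneg (by linarith : 0 ≤ d - b) (by linarith : 0 ≤ d + a)]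

lemma sum_mul_abs_sub_sum_mul_le {s v : ι → ℝ} {d : ℝ} (hs : ∀ i, 0 ≤ s i)
    (hs₁ : ∑ i, s i = 1) (hv : ∀ i, |v i| ≤ d) :
    ∑ i, s i * |v i - ∑ j, s j * v j| ≤ d := by
  set t := ∑ j, s j * v j with ht_def
  have ht : |t| ≤ d :=
    calc |t| ≤ ∑ j, s j * |v j| := by
          simpa only [abs_mul, abs_of_nonneg (hs _)] using
            abs_sum_le_sum_abs (fun j => s j * v j) univ
      _ ≤ ∑ j, s j * d := by gcongr with j; exacts [hs j, hv j]
      _ = d := by rw [← sum_mul, hs₁, one_mul]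
  rcases ((abs_nonneg t).trans ht).eq_or_lt with rfl | hd
  · have hv₀ : ∀ i, v i = 0 := fun i => abs_nonpos_iff.mp (hv i)
    simp [t, hv₀]
  refine le_of_mul_le_mul_left ?_ hd
  calc d * ∑ i, s i * |v i - t| = ∑ i, s i * (d * |v i - t|) := by
        rw [mul_sum]; exact sum_congr rfl fun i _ => by ring
    _ ≤ ∑ i, s i * (d * d - v i * t) := by
        gcongr with i; exacts [hs i, mul_abs_sub_le_sub_mul (hv i) ht]
    _ = (∑ i, s i) * (d * d) - t * t := by
        rw [ht_def, sum_mul, sum_mul, ← sum_sub_distrib]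
        exact sum_congr rfl fun i _ => by ring
    _ ≤ d * d := by rw [hs₁, one_mul]; nlinarith [mul_self_nonneg t]

theorem HasDerivAt.softmax [Nonempty ι] {γ : ℝ → ι → ℝ} {γ' : ι → ℝ} {τ : ℝ}
    (hγ : HasDerivAt γ γ' τ) :
    HasDerivAt (fun t => softmax (γ t))
      (fun i => softmax (γ τ) i * (γ' i - ∑ j, softmax (γ τ) j * γ' j)) τ := by
  have hexp : ∀ i, HasDerivAt (fun t => Real.exp (γ t i)) (Real.exp (γ τ i) * γ' i) τ :=
    fun i => (hasDerivAt_pi.mp hγ i).exp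
  have hZ : ∑ j, Real.exp (γ τ j) ≠ 0 :=
    (Finset.sum_pos (fun j _ => exp_pos (γ τ j)) univ_nonempty).ne'
  refine hasDerivAt_pi.mpr fun i =>
    ((hexp i).fun_div (HasDerivAt.fun_sum fun j _ => hexp j) hZ).congr_deriv ?_
  simp only [_root_.softmax, div_mul_eq_mul_div, ← sum_div]
  field_simp

theorem sum_abs_softmax_sub_le (x y : ι → ℝ) :
    ∑ i, |softmax x i - softmax y i| ≤ ‖x - y‖ := by
  cases isEmpty_or_nonempty ι
  · simp
  have hv : ∀ i, |(x - y) i| ≤ ‖x - y‖ := fun i => by simpa using norm_le_pi_norm (x - y) i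
  have hline : ∀ t : ℝ, HasDerivAt (fun t => y + t • (x - y)) (x - y) t := fun t => by
    simpa using ((hasDerivAt_id t).smul_const (x - y)).const_add y
  have hmvt := norm_image_sub_le_of_norm_deriv_le_segment_01' (C := ‖x - y‖)
    (f := fun t => WithLp.toLp 1 (softmax (y + t • (x - y))))
    (fun t _ => ((PiLp.hasFDerivAt_toLp (𝕜 := ℝ) 1 _).comp_hasDerivAt t
      (hline t).softmax).hasDerivWithinAt)
    fun t _ => by
      simp only [ContinuousLinearEquiv.coe_coe, PiLp.continuousLinearEquiv_symm_apply,
        PiLp.norm_eq_of_L1, norm_mul, norm_eq_abs, abs_of_nonneg (softmax_nonneg _ _)]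
      exact sum_mul_abs_sub_sum_mul_le (softmax_nonneg _) (sum_softmax _) hv
  simpa [PiLp.norm_eq_of_L1] using hmvt

/-- Softmax is 1-Lipschitz from `(ℝ^m, ℓ∞)` to `(ℝ^m, ℓ¹)`:
`‖softmax x − softmax y‖₁ ≤ ‖x − y‖_∞`. -/
theorem softmax_lipschitz_linf_to_l1 (m : ℕ) (x y : Fin m → ℝ) :
    let softmax : (Fin m → ℝ) → Fin m → ℝ := fun u i =>
      Real.exp (u i) / ∑ j, Real.exp (u j)
    ∑ i, |softmax x i - softmax y i| ≤ ‖x - y‖ :=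
  sum_abs_softmax_sub_le x y
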